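/- arXiv:math/0002060 — 2 statements merged into one kernel-verified Lean document; each statement's English description precedes it below -/
import Mathlib

section
/- The zigzag algebra A(Γ) is a symmetric algebra: there exists a ℂ-linear map tr : A(Γ) → ℂ such that tr(xy) = tr(yx) for all x, y ∈ A(Γ), and the bilinear form (x, y) ↦ tr(xy) is nondegenerate (i.e., if tr(xy) = 0 for all y ∈ A(Γ) then x = 0). -/
/-!
The zigzag algebra `A(Γ)` of a finite simple graph `Γ`, presented as a quotient of the
free algebra on generators `{e_a : a ∈ V} ∪ {x_{ab} : a,b adjacent}`.
-/

noncomputable section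

/-- Generators of the zigzag algebra: one idempotent `e_a` per vertex `a`, and one
generator `x_{ab}` (the arrow `a → b` in the double quiver) per ordered adjacent pair. -/
def ZigzagGen {V : Type} (G : SimpleGraph V) : Type :=
  V ⊕ {p : V × V // G.Adj p.1 p.2}

/-- The idempotent generator `e_a` inside the free algebra. -/
def zge (k : Type) [CommRing k] {V : Type} (G : SimpleGraph V) (a : V) :
    FreeAlgebra k (ZigzagGen G) :=
  FreeAlgebra.ι k (Sum.inl a)

/-- The arrow generator `x_{ab}` inside the free algebra. -/
def zgx (k : Type) [CommRing k] {V : Type} (G : SimpleGraph V) {a b : V} (h : G.Adj a b) :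
    FreeAlgebra k (ZigzagGen G) :=
  FreeAlgebra.ι k (Sum.inr ⟨(a, b), h⟩)

/-- The defining relations of the zigzag algebra `A(Γ)`:
`e_a e_b = δ_{ab} e_a`, `Σ_a e_a = 1`, `e_b x_{ab} = x_{ab} = x_{ab} e_a`,
`x_{bc} x_{ab} = 0` for `c ≠ a`, and `x_{ba} x_{ab} = x_{ca} x_{ac}`. -/
inductive ZigzagRel (k : Type) [CommRing k] {V : Type} [Fintype V] (G : SimpleGraph V) :
    FreeAlgebra k (ZigzagGen G) → FreeAlgebra k (ZigzagGen G) → Prop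
  | idem (a : V) : ZigzagRel k G (zge k G a * zge k G a) (zge k G a)
  | orth (a b : V) (h : a ≠ b) : ZigzagRel k G (zge k G a * zge k G b) 0
  | sum_one : ZigzagRel k G (∑ a : V, zge k G a) 1
  | target_id {a b : V} (h : G.Adj a b) :
      ZigzagRel k G (zge k G b * zgx k G h) (zgx k G h)
  | source_id {a b : V} (h : G.Adj a b) :
      ZigzagRel k G (zgx k G h * zge k G a) (zgx k G h)
  | comp_zero {a b c : V} (h₁ : G.Adj a b) (h₂ : G.Adj b c) (hca : c ≠ a) :
      ZigzagRel k G (zgx k G h₂ * zgx k G h₁) 0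
  | zigzag {a b c : V} (hab : G.Adj a b) (hac : G.Adj a c) :
      ZigzagRel k G (zgx k G hab.symm * zgx k G hab) (zgx k G hac.symm * zgx k G hac)

/-- The zigzag algebra `A(Γ)`. -/
abbrev ZigzagAlgebra (k : Type) [CommRing k] {V : Type} [Fintype V] (G : SimpleGraph V) : Type :=
  RingQuot (ZigzagRel k G)

/-- The idempotent `e_a` of the zigzag algebra. -/
def ZigzagAlgebra.e (k : Type) [CommRing k] {V : Type} [Fintype V] (G : SimpleGraph V)
    (a : V) : ZigzagAlgebra k G :=
  RingQuot.mkAlgHom k (ZigzagRel k G) (zge k G a)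

/-!
The elements `e_a`, `x_{ab}` and the loops `l_a = x_{ba} x_{ab}` (independent of `b` by the
zigzag relation) span `A(Γ)`: their products are again such paths or zero, because
`x_{ab} x_{ba} x_{ab} = 0` as soon as one endpoint of the edge has a second neighbour, which
connectivity and a third vertex guarantee. The trace reads off the coefficients of the loops;
it is well defined because `A(Γ)` acts on the free module with basis these paths, and `tr(u)` is
the sum over `a` of the `l_a`-coordinate of `u e_a`. On the spanning family, `tr(p q) = 1` if `q`
is the path dual to `p` (`e_a ↔ l_a`, `x_{ab} ↔ x_{ba}`) and `0` otherwise. This pairing is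
symmetric and has a dual family, hence the trace form is symmetric and nondegenerate.
-/

section SpanningFamily

open Submodule

variable {R A ι : Type*} [CommSemiring R] [Semiring A] [Algebra R A] {b : ι → A}

theorem Submodule.span_range_eq_top_of_mul_mem {s : Set A} (hs : Algebra.adjoin R s = ⊤)
    (hsb : s ⊆ span R (Set.range b)) (h1 : 1 ∈ span R (Set.range b))
    (hmul : ∀ i j, b i * b j ∈ span R (Set.range b)) : span R (Set.range b) = ⊤ := by
  have hle : span R (Set.range b) * span R (Set.range b) ≤ span R (Set.range b) := by
    rw [span_mul_span, span_le]
    rintro _ ⟨_, ⟨i, rfl⟩, _, ⟨j, rfl⟩, rfl⟩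
    exact hmul i j
  let S : Subalgebra R A :=
    (span R (Set.range b)).toSubalgebra h1 fun x y hx hy => mul_le.1 hle x hx y hy
  refine eq_top_iff.2 fun x _ => ?_
  exact Algebra.adjoin_le (S := S) hsb (hs ▸ Algebra.mem_top : x ∈ Algebra.adjoin R s)

theorem LinearMap.map_mul_comm_of_span_eq_top (tr : A →ₗ[R] R) (hb : span R (Set.range b) = ⊤)
    (h : ∀ i j, tr (b i * b j) = tr (b j * b i)) (x y : A) : tr (x * y) = tr (y * x) := by
  have : (LinearMap.mul R A).compr₂ tr = ((LinearMap.mul R A).compr₂ tr).flip :=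
    LinearMap.ext_on_range hb fun i => LinearMap.ext_on_range hb fun j => h i j
  exact LinearMap.congr_fun₂ this x y

theorem LinearMap.eq_zero_of_forall_map_mul_eq_zero [Fintype ι] [DecidableEq ι]
    (tr : A →ₗ[R] R) (hb : span R (Set.range b) = ⊤) {y : ι → A}
    (hy : ∀ i j, tr (b i * y j) = if i = j then 1 else 0) {u : A}
    (hu : ∀ v, tr (u * v) = 0) : u = 0 := by
  have hu' : u ∈ span R (Set.range b) := hb ▸ mem_top
  obtain ⟨c, rfl⟩ := (mem_span_range_iff_exists_fun R).1 hu'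
  have hc (j : ι) : c j = 0 := by
    simpa [Finset.sum_mul, smul_mul_assoc, hy] using hu (y j)
  simp [hc]

end SpanningFamily

theorem SimpleGraph.Preconnected.exists_adj_of_mem_of_notMem {V : Type*} {G : SimpleGraph V}
    (hG : G.Preconnected) {S : Set V} {u v : V} (hu : u ∈ S) (hv : v ∉ S) :
    ∃ a ∈ S, ∃ b ∉ S, G.Adj a b :=
  let ⟨p⟩ := hG u v
  let ⟨d, _, hd, hd'⟩ := p.exists_boundary_dart S hu hv
  ⟨d.fst, hd, d.snd, hd', d.adj⟩

namespace ZigzagAlgebra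

section PathIdx

variable {V : Type} {G : SimpleGraph V}

abbrev PathIdx (G : SimpleGraph V) : Type := (V ⊕ {p : V × V // G.Adj p.1 p.2}) ⊕ V

def PathIdx.target : PathIdx G → V
  | .inl (.inl a) => a
  | .inl (.inr p) => p.1.2
  | .inr a => a

def PathIdx.dual : PathIdx G → PathIdx G
  | .inl (.inl a) => .inr a
  | .inl (.inr p) => .inl (.inr ⟨p.1.swap, p.2.symm⟩)
  | .inr a => .inl (.inl a)

theorem PathIdx.dual_involutive : Function.Involutive (PathIdx.dual (G := G)) := by
  rintro ((a | p) | a) <;> rfl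

end PathIdx

variable (k : Type) [CommRing k] {V : Type} [Fintype V] {G : SimpleGraph V}

def x {a b : V} (h : G.Adj a b) : ZigzagAlgebra k G :=
  RingQuot.mkAlgHom k (ZigzagRel k G) (zgx k G h)

-- `0` at an isolated vertex, where there is no loop.
open Classical in
def loop (G : SimpleGraph V) (a : V) : ZigzagAlgebra k G :=
  if h : ∃ b, G.Adj a b then x k h.choose_spec.symm * x k h.choose_spec else 0

variable {k}

theorem mkAlgHom_mul_of_rel {u v w : FreeAlgebra k (ZigzagGen G)} (h : ZigzagRel k G (u * v) w) :
    RingQuot.mkAlgHom k (ZigzagRel k G) u * RingQuot.mkAlgHom k (ZigzagRel k G) v =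
      RingQuot.mkAlgHom k (ZigzagRel k G) w := by
  rw [← map_mul]
  exact RingQuot.mkAlgHom_rel k h

theorem completeOrthogonalIdempotents_e : CompleteOrthogonalIdempotents (e k G) where
  idem a := mkAlgHom_mul_of_rel (.idem a)
  ortho a b hab := (mkAlgHom_mul_of_rel (.orth a b hab)).trans (map_zero _)
  complete := by
    rw [← map_one (RingQuot.mkAlgHom k (ZigzagRel k G)), ← RingQuot.mkAlgHom_rel k .sum_one]
    exact (map_sum _ _ _).symm

theorem e_mul_x {a b : V} (h : G.Adj a b) : e k G b * x k h = x k h :=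
  mkAlgHom_mul_of_rel (.target_id h)

theorem x_mul_e {a b : V} (h : G.Adj a b) : x k h * e k G a = x k h :=
  mkAlgHom_mul_of_rel (.source_id h)

theorem x_mul_x_of_ne {a b c : V} (h₁ : G.Adj a b) (h₂ : G.Adj b c) (hca : c ≠ a) :
    x k h₂ * x k h₁ = 0 :=
  (mkAlgHom_mul_of_rel (.comp_zero h₁ h₂ hca)).trans (map_zero _)

theorem x_symm_mul_x {a b c : V} (hab : G.Adj a b) (hac : G.Adj a c) :
    x k hab.symm * x k hab = x k hac.symm * x k hac := by
  rw [x, x, x, x, ← map_mul, ← map_mul]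
  exact RingQuot.mkAlgHom_rel k (.zigzag hab hac)

theorem loop_eq {a b : V} (h : G.Adj a b) : loop k G a = x k h.symm * x k h := by
  rw [loop, dif_pos ⟨b, h⟩]
  exact x_symm_mul_x _ _

theorem e_mul_loop (a : V) : e k G a * loop k G a = loop k G a := by
  by_cases h : ∃ b, G.Adj a b
  · obtain ⟨b, hab⟩ := h
    rw [loop_eq hab, ← mul_assoc, e_mul_x]
  · rw [loop, dif_neg h, mul_zero]

theorem loop_mul_e (a : V) : loop k G a * e k G a = loop k G a := by
  by_cases h : ∃ b, G.Adj a b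
  · obtain ⟨b, hab⟩ := h
    rw [loop_eq hab, mul_assoc, x_mul_e]
  · rw [loop, dif_neg h, zero_mul]

section Peirce

variable {u w : ZigzagAlgebra k G}

theorem e_mul_eq_ite [DecidableEq V] {a : V} (hu : e k G a * u = u) (c : V) :
    e k G c * u = if c = a then u else 0 := by
  split_ifs with hca
  · rwa [hca]
  · rw [← hu, ← mul_assoc, completeOrthogonalIdempotents_e.ortho hca, zero_mul]

theorem mul_e_eq_ite [DecidableEq V] {a : V} (hu : u * e k G a = u) (c : V) :
    u * e k G c = if c = a then u else 0 := by
  split_ifs with hca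
  · rwa [hca]
  · rw [← hu, mul_assoc, completeOrthogonalIdempotents_e.ortho (Ne.symm hca), mul_zero]

theorem mul_eq_zero_of_ne {a c : V} (hu : u * e k G a = u) (hw : e k G c * w = w) (hac : a ≠ c) :
    u * w = 0 := by
  rw [← hu, ← hw, mul_assoc, ← mul_assoc (e k G a), completeOrthogonalIdempotents_e.ortho hac,
    zero_mul, mul_zero]

end Peirce

theorem x_mul_x [DecidableEq V] {a b c d : V} (h₁ : G.Adj a b) (h₂ : G.Adj c d) :
    x k h₁ * x k h₂ = if d = a ∧ c = b then loop k G b else 0 := by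
  split_ifs with h
  · obtain ⟨rfl, rfl⟩ := h
    exact (loop_eq h₂).symm
  · by_cases hda : d = a
    · subst hda
      exact x_mul_x_of_ne h₂ h₁ fun hbc => h ⟨rfl, hbc.symm⟩
    · exact mul_eq_zero_of_ne (x_mul_e h₁) (e_mul_x h₂) (Ne.symm hda)

theorem x_mul_x_symm_mul_x (hconn : G.Connected) (hcard : 2 < Fintype.card V) {a b : V}
    (h : G.Adj a b) : x k h * x k h.symm * x k h = 0 := by
  classical
  obtain ⟨c, -, hc⟩ := Finset.exists_mem_notMem_of_card_lt_card
    (s := {a, b}) (t := Finset.univ) ((Finset.card_le_two).trans_lt hcard)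
  obtain ⟨u, hu, d, hd, hud⟩ := hconn.preconnected.exists_adj_of_mem_of_notMem
    (S := {a, b}) (Set.mem_insert a _) (by simpa using hc)
  simp only [Set.mem_insert_iff, Set.mem_singleton_iff, not_or] at hu hd
  rcases hu with rfl | rfl
  · rw [mul_assoc, x_symm_mul_x h hud, ← mul_assoc, x_mul_x_of_ne hud.symm h (Ne.symm hd.2),
      zero_mul]
  · rw [x_symm_mul_x h.symm hud, mul_assoc, x_mul_x_of_ne h hud hd.1, mul_zero]

theorem x_mul_loop (hconn : G.Connected) (hcard : 2 < Fintype.card V) {a b : V}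
    (h : G.Adj a b) (c : V) : x k h * loop k G c = 0 := by
  by_cases hca : c = a
  · rw [hca, loop_eq h, ← mul_assoc, x_mul_x_symm_mul_x hconn hcard]
  · exact mul_eq_zero_of_ne (x_mul_e h) (e_mul_loop c) (Ne.symm hca)

theorem loop_mul_x (hconn : G.Connected) (hcard : 2 < Fintype.card V) {a b : V}
    (h : G.Adj a b) (c : V) : loop k G c * x k h = 0 := by
  by_cases hcb : c = b
  · rw [hcb, loop_eq h.symm, x_mul_x_symm_mul_x hconn hcard]
  · exact mul_eq_zero_of_ne (loop_mul_e c) (e_mul_x h) hcb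

theorem loop_mul_loop (hconn : G.Connected) (hcard : 2 < Fintype.card V) (a c : V) :
    loop k G a * loop k G c = 0 := by
  by_cases h : ∃ b, G.Adj a b
  · obtain ⟨b, hab⟩ := h
    rw [loop_eq hab, mul_assoc, x_mul_loop hconn hcard, mul_zero]
  · rw [loop, dif_neg h, zero_mul]

variable (k) in
def path : PathIdx G → ZigzagAlgebra k G
  | .inl (.inl a) => e k G a
  | .inl (.inr p) => x k p.2
  | .inr a => loop k G a

theorem path_mul_path_mem_span (hconn : G.Connected) (hcard : 2 < Fintype.card V)
    (i j : PathIdx G) : path k i * path k j ∈ Submodule.span k (Set.range (path k)) := by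
  classical
  have hmem (i : PathIdx G) : path k i ∈ Submodule.span k (Set.range (path k)) :=
    Submodule.subset_span ⟨i, rfl⟩
  have hite (p : Prop) [Decidable p] (i : PathIdx G) :
      (if p then path k i else 0) ∈ Submodule.span k (Set.range (path k)) := by
    split_ifs
    exacts [hmem i, zero_mem _]
  rcases i with (a | ⟨⟨a, b⟩, hab⟩) | a <;>
    rcases j with (c | ⟨⟨c, d⟩, hcd⟩) | c <;>
    simp only [path]
  · rw [completeOrthogonalIdempotents_e.mul_eq]; exact hite _ (.inl (.inl a))
  · rw [e_mul_eq_ite (e_mul_x hcd)]; exact hite _ (.inl (.inr ⟨(c, d), hcd⟩))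
  · rw [e_mul_eq_ite (e_mul_loop c)]; exact hite _ (.inr c)
  · rw [mul_e_eq_ite (x_mul_e hab)]; exact hite _ (.inl (.inr ⟨(a, b), hab⟩))
  · rw [x_mul_x]; exact hite _ (.inr b)
  · rw [x_mul_loop hconn hcard]; exact zero_mem _
  · rw [mul_e_eq_ite (loop_mul_e a)]; exact hite _ (.inr a)
  · rw [loop_mul_x hconn hcard]; exact zero_mem _
  · rw [loop_mul_loop hconn hcard]; exact zero_mem _

theorem adjoin_range_mkAlgHom_ι :
    Algebra.adjoin k (Set.range (RingQuot.mkAlgHom k (ZigzagRel k G) ∘ FreeAlgebra.ι k)) =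
      ⊤ := by
  rw [Set.range_comp, Algebra.adjoin_image, FreeAlgebra.adjoin_range_ι, Algebra.map_top,
    AlgHom.range_eq_top]
  exact RingQuot.mkAlgHom_surjective k _

theorem span_range_path (hconn : G.Connected) (hcard : 2 < Fintype.card V) :
    Submodule.span k (Set.range (path k (G := G))) = ⊤ := by
  refine Submodule.span_range_eq_top_of_mul_mem adjoin_range_mkAlgHom_ι ?_ ?_
    (path_mul_path_mem_span hconn hcard)
  · rintro _ ⟨a | p, rfl⟩
    exacts [Submodule.subset_span ⟨.inl (.inl a), rfl⟩,
      Submodule.subset_span ⟨.inl (.inr p), rfl⟩]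
  · rw [← completeOrthogonalIdempotents_e.complete]
    exact Submodule.sum_mem _ fun a _ => Submodule.subset_span ⟨.inl (.inl a), rfl⟩

section Representation

open Matrix

variable [DecidableEq V]

variable (k G) in
def vertexMatrix (a : V) : Matrix (PathIdx G) (PathIdx G) k :=
  diagonal fun i => if i.target = a then 1 else 0

-- Left multiplication by `x_{ab}` on the paths: `e_a ↦ x_{ab}` and `x_{ba} ↦ l_b`.
variable (k) in
def arrowMatrix {a b : V} (h : G.Adj a b) : Matrix (PathIdx G) (PathIdx G) k :=
  single (.inl (.inr ⟨(a, b), h⟩)) (.inl (.inl a)) 1 +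
    single (.inr b) (.inl (.inr ⟨(b, a), h.symm⟩)) 1

theorem sum_vertexMatrix : ∑ a, vertexMatrix k G a = 1 := by
  ext i j
  simp [vertexMatrix, diagonal_apply, Matrix.sum_apply, one_apply]

variable [DecidableRel G.Adj]

theorem vertexMatrix_mul_vertexMatrix (a b : V) :
    vertexMatrix k G a * vertexMatrix k G b = if a = b then vertexMatrix k G a else 0 := by
  ext i j
  split_ifs <;> simp [vertexMatrix, diagonal_apply] <;> grind

theorem vertexMatrix_mul_arrowMatrix {a b : V} (h : G.Adj a b) :
    vertexMatrix k G b * arrowMatrix k h = arrowMatrix k h := by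
  ext i j
  simp [vertexMatrix, arrowMatrix, diagonal_mul, single, PathIdx.target]
  grind

theorem arrowMatrix_mul_vertexMatrix {a b : V} (h : G.Adj a b) :
    arrowMatrix k h * vertexMatrix k G a = arrowMatrix k h := by
  ext i j
  simp [vertexMatrix, arrowMatrix, mul_diagonal, single, PathIdx.target]
  grind

theorem arrowMatrix_mul_arrowMatrix_of_ne {a b c : V} (h₁ : G.Adj a b) (h₂ : G.Adj b c)
    (hca : c ≠ a) : arrowMatrix k h₂ * arrowMatrix k h₁ = 0 := by
  simp [arrowMatrix, add_mul, mul_add, hca]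

theorem arrowMatrix_symm_mul_arrowMatrix {a b : V} (h : G.Adj a b) :
    arrowMatrix k h.symm * arrowMatrix k h = single (.inr a) (.inl (.inl a)) 1 := by
  simp [arrowMatrix, add_mul, mul_add]

variable (k G) in
def generatorMatrix : ZigzagGen G → Matrix (PathIdx G) (PathIdx G) k
  | .inl a => vertexMatrix k G a
  | .inr p => arrowMatrix k p.2

theorem lift_generatorMatrix_zge (a : V) :
    FreeAlgebra.lift k (generatorMatrix k G) (zge k G a) = vertexMatrix k G a :=
  FreeAlgebra.lift_ι_apply _ _

theorem lift_generatorMatrix_zgx {a b : V} (h : G.Adj a b) :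
    FreeAlgebra.lift k (generatorMatrix k G) (zgx k G h) = arrowMatrix k h :=
  FreeAlgebra.lift_ι_apply _ _

variable (k G) in
def rep : ZigzagAlgebra k G →ₐ[k] Matrix (PathIdx G) (PathIdx G) k :=
  RingQuot.liftAlgHom k ⟨FreeAlgebra.lift k (generatorMatrix k G), by
    intro u v h
    induction h with
    | idem a =>
      simp only [map_mul, lift_generatorMatrix_zge, vertexMatrix_mul_vertexMatrix, ↓reduceIte]
    | orth a b hab =>
      simp only [map_mul, map_zero, lift_generatorMatrix_zge, vertexMatrix_mul_vertexMatrix,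
        if_neg hab]
    | sum_one => simp only [map_sum, map_one, lift_generatorMatrix_zge, sum_vertexMatrix]
    | target_id h =>
      simp only [map_mul, lift_generatorMatrix_zge, lift_generatorMatrix_zgx,
        vertexMatrix_mul_arrowMatrix]
    | source_id h =>
      simp only [map_mul, lift_generatorMatrix_zge, lift_generatorMatrix_zgx,
        arrowMatrix_mul_vertexMatrix]
    | comp_zero h₁ h₂ hca =>
      simp only [map_mul, map_zero, lift_generatorMatrix_zgx,
        arrowMatrix_mul_arrowMatrix_of_ne h₁ h₂ hca]
    | zigzag hab hac =>
      simp only [map_mul, lift_generatorMatrix_zgx, arrowMatrix_symm_mul_arrowMatrix]⟩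

theorem rep_e (a : V) : rep k G (e k G a) = vertexMatrix k G a :=
  (RingQuot.liftAlgHom_mkAlgHom_apply _ _ _ _).trans (lift_generatorMatrix_zge a)

theorem rep_x {a b : V} (h : G.Adj a b) : rep k G (x k h) = arrowMatrix k h :=
  (RingQuot.liftAlgHom_mkAlgHom_apply _ _ _ _).trans (lift_generatorMatrix_zgx h)

variable (k G) in
def trace : ZigzagAlgebra k G →ₗ[k] k :=
  ∑ a, entryLinearMap k k (.inr a : PathIdx G) (.inl (.inl a)) ∘ₗ (rep k G).toLinearMap

theorem trace_apply (u : ZigzagAlgebra k G) :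
    trace k G u = ∑ a, rep k G u (.inr a) (.inl (.inl a)) := by
  simp [trace]

theorem trace_e (a : V) : trace k G (e k G a) = 0 := by
  simp [trace_apply, rep_e, vertexMatrix]

theorem trace_x {a b : V} (h : G.Adj a b) : trace k G (x k h) = 0 := by
  simp [trace_apply, rep_x, arrowMatrix, single]

theorem trace_loop {a b : V} (h : G.Adj a b) : trace k G (loop k G a) = 1 := by
  simp [trace_apply, loop_eq h, rep_x, arrowMatrix_symm_mul_arrowMatrix, single]

end Representation

section Pairing

variable [DecidableEq V] [DecidableRel G.Adj]

theorem trace_loop_of_connected (hconn : G.Connected) (hcard : 2 < Fintype.card V) (a : V) :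
    trace k G (loop k G a) = 1 :=
  have : Nontrivial V := Fintype.one_lt_card_iff_nontrivial.1 (by omega)
  trace_loop (hconn.preconnected.exists_adj_of_nontrivial a).choose_spec

theorem trace_path_mul_path (hconn : G.Connected) (hcard : 2 < Fintype.card V)
    (i j : PathIdx G) : trace k G (path k i * path k j) = if i = j.dual then 1 else 0 := by
  have hloop := trace_loop_of_connected (k := k) hconn hcard
  rcases i with (a | ⟨⟨a, b⟩, hab⟩) | a <;>
    rcases j with (c | ⟨⟨c, d⟩, hcd⟩) | c <;>
    simp only [path, PathIdx.dual]
  · rw [completeOrthogonalIdempotents_e.mul_eq]; split_ifs <;> simp_all [trace_e]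
  · rw [e_mul_eq_ite (e_mul_x hcd)]; split_ifs <;> simp_all [trace_x]
  · rw [e_mul_eq_ite (e_mul_loop c)]; split_ifs <;> simp_all
  · rw [mul_e_eq_ite (x_mul_e hab)]; split_ifs <;> simp_all [trace_x]
  · rw [x_mul_x]; split_ifs <;> simp_all
  · simp [x_mul_loop hconn hcard]
  · rw [mul_e_eq_ite (loop_mul_e a)]; split_ifs <;> simp_all
  · simp [loop_mul_x hconn hcard]
  · simp [loop_mul_loop hconn hcard]

theorem trace_mul_comm (hconn : G.Connected)
    (hcard : 2 < Fintype.card V) (u w : ZigzagAlgebra k G) :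
    trace k G (u * w) = trace k G (w * u) := by
  refine (trace k G).map_mul_comm_of_span_eq_top (span_range_path hconn hcard) (fun i j => ?_) u w
  rw [trace_path_mul_path hconn hcard, trace_path_mul_path hconn hcard]
  exact if_congr (PathIdx.dual_involutive.eq_iff.symm.trans eq_comm) rfl rfl

theorem eq_zero_of_forall_trace_mul_eq_zero (hconn : G.Connected) (hcard : 2 < Fintype.card V)
    {u : ZigzagAlgebra k G}
    (hu : ∀ w, trace k G (u * w) = 0) : u = 0 := by
  refine (trace k G).eq_zero_of_forall_map_mul_eq_zero (span_range_path hconn hcard)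
    (y := fun j => path k j.dual) (fun i j => ?_) hu
  rw [trace_path_mul_path hconn hcard, PathIdx.dual_involutive]

end Pairing

end ZigzagAlgebra

theorem zigzagAlgebra_symmetric_general {V : Type} [Fintype V]
    (G : SimpleGraph V)
    (hconn : G.Connected) (hcard : 2 < Fintype.card V) :
    ∃ tr : ZigzagAlgebra ℂ G →ₗ[ℂ] ℂ,
      (∀ x y : ZigzagAlgebra ℂ G, tr (x * y) = tr (y * x)) ∧
      (∀ x : ZigzagAlgebra ℂ G, (∀ y : ZigzagAlgebra ℂ G, tr (x * y) = 0) → x = 0) := by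
  classical
  exact ⟨ZigzagAlgebra.trace ℂ G, ZigzagAlgebra.trace_mul_comm hconn hcard,
    fun _ => ZigzagAlgebra.eq_zero_of_forall_trace_mul_eq_zero hconn hcard⟩

/-- the zigzag algebra `A(Γ)` is a symmetric algebra: it carries a
`ℂ`-linear trace `tr : A(Γ) → ℂ` with `tr(xy) = tr(yx)` whose associated bilinear form
`(x, y) ↦ tr(xy)` is nondegenerate. -/
theorem zigzagAlgebra_symmetric {V : Type} [Fintype V] [DecidableEq V]
    (G : SimpleGraph V) [DecidableRel G.Adj]
    (hconn : G.Connected) (hcard : 2 < Fintype.card V) :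
    ∃ tr : ZigzagAlgebra ℂ G →ₗ[ℂ] ℂ,
      (∀ x y : ZigzagAlgebra ℂ G, tr (x * y) = tr (y * x)) ∧
      (∀ x : ZigzagAlgebra ℂ G, (∀ y : ZigzagAlgebra ℂ G, tr (x * y) = 0) → x = 0) :=
  zigzagAlgebra_symmetric_general G hconn hcard

end
end

section
/- For simple roots α, β ∈ Π with (α,β) = 0, the operators on R satisfy E_α E_β = E_β E_α; and for α, β ∈ Π with (α,β) = −1, they satisfy the quantum Serre relation E_α² E_β − (q + q⁻¹) E_α E_β E_α + E_β E_α² = 0 as ℚ(q)-linear endomorphisms of R. -/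
/-!
The adjoint representation of a simply-laced quantum group, realized concretely on the
`ℚ(q)`-vector space with basis `{x_μ : μ ∈ Φ} ∪ {h_α : α ∈ Π}`.
-/

noncomputable section

open Polynomial

/-- The field `ℚ(q)` of rational functions over `ℚ`. -/
abbrev Qq : Type := RatFunc ℚ

/-- The indeterminate `q ∈ ℚ(q)`. -/
def qv : Qq := RatFunc.X

/-- A datum abstracting a simply-laced root system `Φ` with base `Π`, normalized so that
`(α, α) = 2` for roots: a symmetric bilinear form `B` together with the standard
combinatorial facts about pairings of roots and simple roots that hold in any finite
reduced irreducible crystallographic simply-laced root system. -/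
structure SimplyLacedDatum (E : Type) [AddCommGroup E] [Module ℚ E] where
  /-- the inner product `(·,·)` -/
  B : E →ₗ[ℚ] E →ₗ[ℚ] ℚ
  symm : ∀ x y : E, B x y = B y x
  /-- the set of roots `Φ` -/
  Phi : Set E
  /-- the base `Π` of simple roots -/
  Base : Set E
  base_sub : Base ⊆ Phi
  phi_finite : Phi.Finite
  zero_not_mem : (0 : E) ∉ Phi
  crystallographic : ∀ μ ∈ Phi, ∀ ν ∈ Phi, ∃ n : ℤ, B μ ν = n
  norm_two : ∀ μ ∈ Phi, B μ μ = 2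
  neg_mem : ∀ μ ∈ Phi, -μ ∈ Phi
  base_pair : ∀ α ∈ Base, ∀ β ∈ Base, α ≠ β → B α β = 0 ∨ B α β = -1
  pair_range : ∀ μ ∈ Phi, ∀ α ∈ Base,
      B μ α = -2 ∨ B μ α = -1 ∨ B μ α = 0 ∨ B μ α = 1 ∨ B μ α = 2
  pair_two_iff : ∀ μ ∈ Phi, ∀ α ∈ Base, (B μ α = 2 ↔ μ = α)
  pair_neg_two_iff : ∀ μ ∈ Phi, ∀ α ∈ Base, (B μ α = -2 ↔ μ = -α)
  add_mem : ∀ μ ∈ Phi, ∀ α ∈ Base, B μ α = -1 → μ + α ∈ Phi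
  sub_mem : ∀ μ ∈ Phi, ∀ α ∈ Base, B μ α = 1 → μ - α ∈ Phi

namespace SimplyLacedDatum

variable {E : Type} [AddCommGroup E] [Module ℚ E] (D : SimplyLacedDatum E)

/-- The index set for the canonical basis of the adjoint representation:
one index for each root `μ ∈ Φ` (the vector `x_μ`) and one for each simple root
`α ∈ Π` (the vector `h_α`). -/
def Idx : Type := {μ : E // μ ∈ D.Phi} ⊕ {α : E // α ∈ D.Base}

/-- The adjoint representation `R`, as the free `ℚ(q)`-module on `Idx`. -/
def R : Type := D.Idx →₀ Qq

instance : AddCommGroup D.R := inferInstanceAs (AddCommGroup (D.Idx →₀ Qq))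
instance : Module Qq D.R := inferInstanceAs (Module Qq (D.Idx →₀ Qq))

/-- The canonical basis vector `x_μ`, for a root `μ ∈ Φ`. -/
def xv (μ : E) (h : μ ∈ D.Phi) : D.R := Finsupp.single (Sum.inl ⟨μ, h⟩) 1

/-- The canonical basis vector `h_α`, for a simple root `α ∈ Π`. -/
def hv (α : E) (h : α ∈ D.Base) : D.R := Finsupp.single (Sum.inr ⟨α, h⟩) 1

/-- The `ℚ(q)`-linear operator on `R` sending the basis vector indexed by `i` to `v i`. -/
def opOf (v : D.Idx → D.R) : D.R →ₗ[Qq] D.R :=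
  Finsupp.lsum Qq fun i => LinearMap.toSpanSingleton Qq D.R (v i)

open Classical in
/-- The images of the basis vectors under `E_α`. -/
def Evec (α : E) (hα : α ∈ D.Base) : D.Idx → D.R := fun i =>
  match i with
  | Sum.inl μ =>
      if h : D.B μ.1 α = -1 then D.xv (μ.1 + α) (D.add_mem μ.1 μ.2 α hα h)
      else if D.B μ.1 α = -2 then D.hv α hα
      else 0
  | Sum.inr β =>
      if β.1 = α then (qv + qv⁻¹) • D.xv α (D.base_sub hα)
      else if D.B β.1 α = -1 then D.xv α (D.base_sub hα)
      else 0

open Classical in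
/-- The images of the basis vectors under `F_α`. -/
def Fvec (α : E) (hα : α ∈ D.Base) : D.Idx → D.R := fun i =>
  match i with
  | Sum.inl μ =>
      if h : D.B μ.1 α = 1 then D.xv (μ.1 - α) (D.sub_mem μ.1 μ.2 α hα h)
      else if D.B μ.1 α = 2 then D.hv α hα
      else 0
  | Sum.inr β =>
      if β.1 = α then (qv + qv⁻¹) • D.xv (-α) (D.neg_mem α (D.base_sub hα))
      else if D.B β.1 α = -1 then D.xv (-α) (D.neg_mem α (D.base_sub hα))
      else 0

/-- The images of the basis vectors under `K_α`: `K_α x_μ = q^{(α,μ)} x_μ`,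
`K_α h_β = h_β`. -/
def Kvec (α : E) (hα : α ∈ D.Base) : D.Idx → D.R := fun i =>
  match i with
  | Sum.inl μ => qv ^ (D.B α μ.1).num • D.xv μ.1 μ.2
  | Sum.inr β => D.hv β.1 β.2

/-- The images of the basis vectors under `K_α⁻¹`: `K_α⁻¹ x_μ = q^{−(α,μ)} x_μ`,
`K_α⁻¹ h_β = h_β`. -/
def Kinvvec (α : E) (hα : α ∈ D.Base) : D.Idx → D.R := fun i =>
  match i with
  | Sum.inl μ => qv ^ (-(D.B α μ.1).num) • D.xv μ.1 μ.2
  | Sum.inr β => D.hv β.1 β.2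

/-- The operator `E_α` on the adjoint representation. -/
def opE (α : E) (hα : α ∈ D.Base) : D.R →ₗ[Qq] D.R := D.opOf (D.Evec α hα)

/-- The operator `F_α` on the adjoint representation. -/
def opF (α : E) (hα : α ∈ D.Base) : D.R →ₗ[Qq] D.R := D.opOf (D.Fvec α hα)

/-- The operator `K_α` on the adjoint representation. -/
def opK (α : E) (hα : α ∈ D.Base) : D.R →ₗ[Qq] D.R := D.opOf (D.Kvec α hα)

/-- The operator `K_α⁻¹` on the adjoint representation. -/
def opKinv (α : E) (hα : α ∈ D.Base) : D.R →ₗ[Qq] D.R := D.opOf (D.Kinvvec α hα)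

/-! Both relations are checked on the basis vectors `x_μ`, `h_γ`. Since `E_α x_μ` is `0`
unless `(μ, α) < 0`, and `E_α² x_μ = 0` unless `μ = -α`, only a handful of configurations of
the pairings `(μ, α)`, `(μ, β)` contribute. In each of them the surviving terms are explicit
multiples of the same basis vector and cancel; in the Serre relation the coefficient
`q + q⁻¹` is matched by `E_α h_α = (q + q⁻¹) x_α`. -/

lemma pair_trichotomy {μ α : E} (hμ : μ ∈ D.Phi) (hα : α ∈ D.Base) :
    D.B μ α = -2 ∨ D.B μ α = -1 ∨ 0 ≤ D.B μ α := by
  rcases D.pair_range μ hμ α hα with h | h | h | h | h <;> simp [h]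

lemma xv_congr {μ ν : E} (h : μ = ν) (hμ : μ ∈ D.Phi) (hν : ν ∈ D.Phi) :
    D.xv μ hμ = D.xv ν hν := by
  subst h; rfl

lemma opOf_single (v : D.Idx → D.R) (i : D.Idx) :
    D.opOf v (Finsupp.single i 1) = v i :=
  (Finsupp.lsum_single Qq _ i 1).trans (one_smul Qq (v i))

lemma opE_xv {α μ : E} (hα : α ∈ D.Base) (hμ : μ ∈ D.Phi) :
    D.opE α hα (D.xv μ hμ) = D.Evec α hα (.inl ⟨μ, hμ⟩) :=
  D.opOf_single _ _

lemma opE_hv {α γ : E} (hα : α ∈ D.Base) (hγ : γ ∈ D.Base) :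
    D.opE α hα (D.hv γ hγ) = D.Evec α hα (.inr ⟨γ, hγ⟩) :=
  D.opOf_single _ _

lemma opE_xv_of_pair_eq_neg_one {α μ : E} (hα : α ∈ D.Base) (hμ : μ ∈ D.Phi)
    (h : D.B μ α = -1) :
    D.opE α hα (D.xv μ hμ) = D.xv (μ + α) (D.add_mem μ hμ α hα h) := by
  rw [opE_xv]; simp [Evec, h]

lemma opE_xv_of_pair_eq_neg_two {α μ : E} (hα : α ∈ D.Base) (hμ : μ ∈ D.Phi)
    (h : D.B μ α = -2) :
    D.opE α hα (D.xv μ hμ) = D.hv α hα := by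
  rw [opE_xv]; simp [Evec, h]

lemma opE_xv_of_pair_nonneg {α μ : E} (hα : α ∈ D.Base) (hμ : μ ∈ D.Phi)
    (h : 0 ≤ D.B μ α) :
    D.opE α hα (D.xv μ hμ) = 0 := by
  have h₁ : D.B μ α ≠ -1 := by linarith
  have h₂ : D.B μ α ≠ -2 := by linarith
  rw [opE_xv]; simp [Evec, h₁, h₂]

lemma opE_hv_self {α : E} (hα : α ∈ D.Base) :
    D.opE α hα (D.hv α hα) = (qv + qv⁻¹) • D.xv α (D.base_sub hα) := by
  rw [opE_hv]; simp [Evec]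

lemma ne_of_pair_ne_two {γ α : E} (hα : α ∈ D.Base) (h : D.B γ α ≠ 2) : γ ≠ α := by
  rintro rfl
  exact h (D.norm_two γ (D.base_sub hα))

lemma opE_hv_of_pair_eq_neg_one {α γ : E} (hα : α ∈ D.Base) (hγ : γ ∈ D.Base)
    (h : D.B γ α = -1) :
    D.opE α hα (D.hv γ hγ) = D.xv α (D.base_sub hα) := by
  have hne : γ ≠ α := D.ne_of_pair_ne_two hα (by rw [h]; norm_num)
  rw [opE_hv]; simp [Evec, hne, h]

lemma opE_hv_of_pair_eq_zero {α γ : E} (hα : α ∈ D.Base) (hγ : γ ∈ D.Base)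
    (h : D.B γ α = 0) :
    D.opE α hα (D.hv γ hγ) = 0 := by
  have hne : γ ≠ α := D.ne_of_pair_ne_two hα (by rw [h]; norm_num)
  rw [opE_hv]; simp [Evec, hne, h]

lemma exists_opE_hv_eq_smul {α γ : E} (hα : α ∈ D.Base) (hγ : γ ∈ D.Base) :
    ∃ c : Qq, D.opE α hα (D.hv γ hγ) = c • D.xv α (D.base_sub hα) := by
  by_cases hself : γ = α
  · subst hself
    exact ⟨_, D.opE_hv_self hα⟩
  · rcases D.base_pair γ hγ α hα hself with h | h
    · exact ⟨0, by rw [zero_smul, D.opE_hv_of_pair_eq_zero hα hγ h]⟩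
    · exact ⟨1, by rw [one_smul, D.opE_hv_of_pair_eq_neg_one hα hγ h]⟩

lemma opE_opE_xv_of_pair_ne_neg_two {α μ : E} (hα : α ∈ D.Base) (hμ : μ ∈ D.Phi)
    (h : D.B μ α ≠ -2) :
    D.opE α hα (D.opE α hα (D.xv μ hμ)) = 0 := by
  rcases D.pair_trichotomy hμ hα with h₂ | h₁ | h₀
  · exact absurd h₂ h
  · have hμα : D.B (μ + α) α = 1 := by
      rw [LinearMap.map_add₂, h₁, D.norm_two α (D.base_sub hα)]; norm_num
    rw [D.opE_xv_of_pair_eq_neg_one hα hμ h₁,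
      D.opE_xv_of_pair_nonneg hα _ (by rw [hμα]; norm_num)]
  · rw [D.opE_xv_of_pair_nonneg hα hμ h₀, map_zero]

lemma ext_basis {f g : D.R →ₗ[Qq] D.R}
    (hx : ∀ μ (hμ : μ ∈ D.Phi), f (D.xv μ hμ) = g (D.xv μ hμ))
    (hh : ∀ γ (hγ : γ ∈ D.Base), f (D.hv γ hγ) = g (D.hv γ hγ)) : f = g := by
  refine Finsupp.lhom_ext' fun i => LinearMap.ext_ring ?_
  rcases i with ⟨μ, hμ⟩ | ⟨γ, hγ⟩
  · exact hx μ hμ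
  · exact hh γ hγ

lemma opE_opE_hv_of_pair_nonneg {α β γ : E} (hα : α ∈ D.Base) (hβ : β ∈ D.Base)
    (hγ : γ ∈ D.Base) (hβα : 0 ≤ D.B β α) :
    D.opE α hα (D.opE β hβ (D.hv γ hγ)) = 0 := by
  obtain ⟨c, hc⟩ := D.exists_opE_hv_eq_smul hβ hγ
  rw [hc, map_smul, D.opE_xv_of_pair_nonneg hα _ hβα, smul_zero]

lemma opE_opE_xv_of_orthogonal_of_not_and {α β μ : E} (hα : α ∈ D.Base) (hβ : β ∈ D.Base)
    (hμ : μ ∈ D.Phi) (hαβ : D.B α β = 0) (h : ¬(D.B μ α = -1 ∧ D.B μ β = -1)) :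
    D.opE α hα (D.opE β hβ (D.xv μ hμ)) = 0 := by
  have hβα : D.B β α = 0 := by rw [D.symm]; exact hαβ
  rcases D.pair_trichotomy hμ hβ with hμβ | hμβ | hμβ
  · obtain rfl := (D.pair_neg_two_iff μ hμ β hβ).mp hμβ
    rw [D.opE_xv_of_pair_eq_neg_two hβ hμ hμβ, D.opE_hv_of_pair_eq_zero hα hβ hβα]
  · have hμα : 0 ≤ D.B μ α := by
      rcases D.pair_trichotomy hμ hα with hμα | hμα | hμα
      · obtain rfl := (D.pair_neg_two_iff μ hμ α hα).mp hμα
        rw [LinearMap.map_neg₂, hαβ] at hμβ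
        norm_num at hμβ
      · exact absurd ⟨hμα, hμβ⟩ h
      · exact hμα
    rw [D.opE_xv_of_pair_eq_neg_one hβ hμ hμβ,
      D.opE_xv_of_pair_nonneg hα _ (by rwa [LinearMap.map_add₂, hβα, add_zero])]
  · rw [D.opE_xv_of_pair_nonneg hβ hμ hμβ, map_zero]

lemma opE_comm_xv_of_orthogonal {α β μ : E} (hα : α ∈ D.Base) (hβ : β ∈ D.Base)
    (hμ : μ ∈ D.Phi) (hαβ : D.B α β = 0) :
    D.opE α hα (D.opE β hβ (D.xv μ hμ)) = D.opE β hβ (D.opE α hα (D.xv μ hμ)) := by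
  have hβα : D.B β α = 0 := by rw [D.symm]; exact hαβ
  by_cases h : D.B μ α = -1 ∧ D.B μ β = -1
  · obtain ⟨hμα, hμβ⟩ := h
    rw [D.opE_xv_of_pair_eq_neg_one hβ hμ hμβ,
      D.opE_xv_of_pair_eq_neg_one hα _ (by rw [LinearMap.map_add₂, hμα, hβα, add_zero]),
      D.opE_xv_of_pair_eq_neg_one hα hμ hμα,
      D.opE_xv_of_pair_eq_neg_one hβ _ (by rw [LinearMap.map_add₂, hμβ, hαβ, add_zero])]
    exact D.xv_congr (add_right_comm μ β α) _ _
  · rw [D.opE_opE_xv_of_orthogonal_of_not_and hα hβ hμ hαβ h,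
      D.opE_opE_xv_of_orthogonal_of_not_and hβ hα hμ hβα (by rwa [and_comm])]

lemma opE_comm_of_orthogonal {α β : E} (hα : α ∈ D.Base) (hβ : β ∈ D.Base)
    (hαβ : D.B α β = 0) :
    D.opE α hα ∘ₗ D.opE β hβ = D.opE β hβ ∘ₗ D.opE α hα := by
  have hβα : D.B β α = 0 := by rw [D.symm]; exact hαβ
  refine D.ext_basis (fun μ hμ => D.opE_comm_xv_of_orthogonal hα hβ hμ hαβ) fun γ hγ => ?_
  simp only [LinearMap.comp_apply]
  rw [D.opE_opE_hv_of_pair_nonneg hα hβ hγ hβα.ge, D.opE_opE_hv_of_pair_nonneg hβ hα hγ hαβ.ge]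

def serreE (α : E) (hα : α ∈ D.Base) (β : E) (hβ : β ∈ D.Base) : D.R →ₗ[Qq] D.R :=
  D.opE α hα ∘ₗ D.opE α hα ∘ₗ D.opE β hβ
    - (qv + qv⁻¹) • (D.opE α hα ∘ₗ D.opE β hβ ∘ₗ D.opE α hα)
    + D.opE β hβ ∘ₗ D.opE α hα ∘ₗ D.opE α hα

lemma serreE_apply {α β : E} (hα : α ∈ D.Base) (hβ : β ∈ D.Base) (v : D.R) :
    D.serreE α hα β hβ v =
      D.opE α hα (D.opE α hα (D.opE β hβ v))
        - (qv + qv⁻¹) • D.opE α hα (D.opE β hβ (D.opE α hα v))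
        + D.opE β hβ (D.opE α hα (D.opE α hα v)) :=
  rfl

lemma opE_opE_xv_of_pair_pos {α β ν : E} (hα : α ∈ D.Base) (hβ : β ∈ D.Base)
    (hν : ν ∈ D.Phi) (hβα : D.B β α = -1) (hνα : 1 ≤ D.B ν α) (hνβ : -1 ≤ D.B ν β) :
    D.opE α hα (D.opE β hβ (D.xv ν hν)) = 0 := by
  rcases D.pair_trichotomy hν hβ with hνβ' | hνβ' | hνβ'
  · linarith
  · rw [D.opE_xv_of_pair_eq_neg_one hβ hν hνβ',
      D.opE_xv_of_pair_nonneg hα _ (by rw [LinearMap.map_add₂, hβα]; linarith)]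
  · rw [D.opE_xv_of_pair_nonneg hβ hν hνβ', map_zero]

section Serre

variable {α β : E} (hα : α ∈ D.Base) (hβ : β ∈ D.Base)

lemma serreE_hv (hαβ : D.B α β = -1) {γ : E} (hγ : γ ∈ D.Base) :
    D.serreE α hα β hβ (D.hv γ hγ) = 0 := by
  have hβα : D.B β α = -1 := by rw [D.symm]; exact hαβ
  have hαα : D.B α α = 2 := D.norm_two α (D.base_sub hα)
  obtain ⟨a, ha⟩ := D.exists_opE_hv_eq_smul hα hγ
  obtain ⟨b, hb⟩ := D.exists_opE_hv_eq_smul hβ hγ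
  rw [serreE_apply, ha, hb]
  simp only [map_smul]
  rw [D.opE_opE_xv_of_pair_ne_neg_two hα _ (by rw [hβα]; norm_num),
    D.opE_opE_xv_of_pair_pos hα hβ _ hβα (by rw [hαα]; norm_num) (by rw [hαβ]),
    D.opE_xv_of_pair_nonneg hα _ (by rw [hαα]; norm_num)]
  simp

lemma serreE_xv_of_pair_eq_neg_two (hαβ : D.B α β = -1) {μ : E} (hμ : μ ∈ D.Phi)
    (hμα : D.B μ α = -2) :
    D.serreE α hα β hβ (D.xv μ hμ) = 0 := by
  have hβα : D.B β α = -1 := by rw [D.symm]; exact hαβ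
  obtain rfl := (D.pair_neg_two_iff μ hμ α hα).mp hμα
  have hμβ : 0 ≤ D.B (-α) β := by rw [LinearMap.map_neg₂, hαβ]; norm_num
  rw [serreE_apply, D.opE_xv_of_pair_nonneg hβ hμ hμβ, map_zero, map_zero,
    D.opE_xv_of_pair_eq_neg_two hα hμ hμα, D.opE_hv_of_pair_eq_neg_one hβ hα hαβ,
    D.opE_xv_of_pair_eq_neg_one hα _ hβα, D.opE_hv_self hα, map_smul,
    D.opE_xv_of_pair_eq_neg_one hβ _ hαβ,
    D.xv_congr (add_comm β α) _ (D.add_mem α (D.base_sub hα) β hβ hαβ)]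
  abel

lemma serreE_xv_of_pair_eq_neg_one (hαβ : D.B α β = -1) {μ : E} (hμ : μ ∈ D.Phi)
    (hμα : D.B μ α = -1) :
    D.serreE α hα β hβ (D.xv μ hμ) = 0 := by
  have hβα : D.B β α = -1 := by rw [D.symm]; exact hαβ
  have hαα : D.B α α = 2 := D.norm_two α (D.base_sub hα)
  rw [serreE_apply, D.opE_opE_xv_of_pair_ne_neg_two hα hμ (by rw [hμα]; norm_num), map_zero,
    add_zero, D.opE_xv_of_pair_eq_neg_one hα hμ hμα]
  rcases D.pair_trichotomy hμ hβ with hμβ | hμβ | hμβ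
  · obtain rfl := (D.pair_neg_two_iff μ hμ β hβ).mp hμβ
    rw [LinearMap.map_neg₂, hβα] at hμα
    norm_num at hμα
  · rw [D.opE_xv_of_pair_eq_neg_one hβ hμ hμβ,
      D.opE_xv_of_pair_eq_neg_two hα _ (by rw [LinearMap.map_add₂, hμα, hβα]; norm_num),
      D.opE_hv_self hα,
      D.opE_xv_of_pair_eq_neg_two hβ _ (by rw [LinearMap.map_add₂, hμβ, hαβ]; norm_num),
      D.opE_hv_of_pair_eq_neg_one hα hβ hβα, sub_self]
  · rw [D.opE_xv_of_pair_nonneg hβ hμ hμβ, map_zero, map_zero,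
      D.opE_opE_xv_of_pair_pos hα hβ _ hβα
        (by rw [LinearMap.map_add₂, hμα, hαα]; norm_num)
        (by rw [LinearMap.map_add₂, hαβ]; linarith)]
    simp

lemma serreE_xv_of_pair_nonneg (hαβ : D.B α β = -1) {μ : E} (hμ : μ ∈ D.Phi)
    (hμα : 0 ≤ D.B μ α) :
    D.serreE α hα β hβ (D.xv μ hμ) = 0 := by
  have hβα : D.B β α = -1 := by rw [D.symm]; exact hαβ
  have hαα : D.B α α = 2 := D.norm_two α (D.base_sub hα)
  rw [serreE_apply, D.opE_xv_of_pair_nonneg hα hμ hμα]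
  simp only [map_zero, smul_zero, sub_zero, add_zero]
  rcases D.pair_trichotomy hμ hβ with hμβ | hμβ | hμβ
  · rw [D.opE_xv_of_pair_eq_neg_two hβ hμ hμβ, D.opE_hv_of_pair_eq_neg_one hα hβ hβα,
      D.opE_xv_of_pair_nonneg hα _ (by rw [hαα]; norm_num)]
  · rw [D.opE_xv_of_pair_eq_neg_one hβ hμ hμβ,
      D.opE_opE_xv_of_pair_ne_neg_two hα _ (by rw [LinearMap.map_add₂, hβα]; linarith)]
  · rw [D.opE_xv_of_pair_nonneg hβ hμ hμβ, map_zero, map_zero]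

lemma serreE_eq_zero (hαβ : D.B α β = -1) : D.serreE α hα β hβ = 0 := by
  refine D.ext_basis (fun μ hμ => ?_) fun γ hγ => D.serreE_hv hα hβ hαβ hγ
  rcases D.pair_trichotomy hμ hα with hμα | hμα | hμα
  · exact D.serreE_xv_of_pair_eq_neg_two hα hβ hαβ hμ hμα
  · exact D.serreE_xv_of_pair_eq_neg_one hα hβ hαβ hμ hμα
  · exact D.serreE_xv_of_pair_nonneg hα hβ hαβ hμ hμα

end Serre

end SimplyLacedDatum

end

/-- for simple roots `α, β` with `(α,β) = 0` the operators `E_α, E_β`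
commute, and for `(α,β) = −1` they satisfy the quantum Serre relation
`E_α² E_β − (q + q⁻¹) E_α E_β E_α + E_β E_α² = 0` on `R`. -/
theorem SimplyLacedDatum.serre_E {E : Type} [AddCommGroup E] [Module ℚ E]
    (D : SimplyLacedDatum E) (α : E) (hα : α ∈ D.Base) (β : E) (hβ : β ∈ D.Base) :
    (D.B α β = 0 → D.opE α hα ∘ₗ D.opE β hβ = D.opE β hβ ∘ₗ D.opE α hα) ∧
    (D.B α β = -1 →
      D.opE α hα ∘ₗ D.opE α hα ∘ₗ D.opE β hβ
        - (qv + qv⁻¹) • (D.opE α hα ∘ₗ D.opE β hβ ∘ₗ D.opE α hα)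
        + D.opE β hβ ∘ₗ D.opE α hα ∘ₗ D.opE α hα = 0) :=
  ⟨D.opE_comm_of_orthogonal hα hβ, D.serreE_eq_zero hα hβ⟩
end
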